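/- For d ≥ 3, consider the design 𝒵 consisting of the 2^{d-1} points (±1/2,...,±1/2) ∈ ℝ^d with an even number of negative coordinates (a resolution-d half fraction of the full factorial design). Then the covering radius of 𝒵 with respect to the cube [-1,1]^d, i.e. max over X ∈ [-1,1]^d of min over Z ∈ 𝒵 of ‖X - Z‖, equals √(d+8)/2. -/

import Mathlib

open scoped Classical

/-- The covering radius of a set of points `D` relative to the cube `[-1,1]^d`:
`CR(D) = sup_{X ∈ [-1,1]^d} inf_{Z ∈ D} ‖X - Z‖`. -/
noncomputable def coveringRadius (d : ℕ) (D : Set (EuclideanSpace ℝ (Fin d))) : ℝ :=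
  ⨆ X : {X : EuclideanSpace ℝ (Fin d) // ∀ i, X i ∈ Set.Icc (-1 : ℝ) 1},
    ⨅ Z : D, dist (X : EuclideanSpace ℝ (Fin d)) (Z : EuclideanSpace ℝ (Fin d))

/-- The half-fraction design: points `(±1/2,…,±1/2)` with an even number of
negative coordinates. -/
def halfFractionDesign (d : ℕ) : Set (EuclideanSpace ℝ (Fin d)) :=
  {Z | (∀ i, Z i = 1 / 2 ∨ Z i = -(1 / 2)) ∧
    Even (Finset.univ.filter (fun i => Z i = -(1 / 2))).card}

/-! Write a point of `{±r}^d` as `signVector r S`, with `S` its set of negative coordinates.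
A point `X` of the cube is within squared distance `1/4` of `±1/2` in each coordinate where the
signs agree, and within `9/4` where they disagree. Rounding `X` to its sign pattern and flipping
at most one sign to make the pattern even thus gives squared distance at most `(d + 8)/4`.
Conversely, the vertex `(-1, 1, …, 1)` has an odd sign pattern, so every design point disagrees
with it in some coordinate, which costs `9/4` there and `1/4` in every other coordinate. -/

open Finset
open scoped symmDiff

theorem Finset.exists_even_card_and_card_symmDiff_le_one {α : Type*} [DecidableEq α]
    (S : Finset α) : ∃ T : Finset α, Even #T ∧ #(S ∆ T) ≤ 1 := by
  rcases Nat.even_or_odd #S with hS | hS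
  · exact ⟨S, hS, by simp⟩
  · obtain ⟨j, hj⟩ := card_pos.mp hS.pos
    refine ⟨S.erase j, ?_, ?_⟩
    · rw [card_erase_of_mem hj]
      exact Nat.Odd.sub_odd hS odd_one
    · rw [symmDiff_of_ge (erase_subset j S), card_sdiff_of_subset (erase_subset j S),
        card_erase_of_mem hj]
      omega

theorem Finset.sum_univ_const_add_ite_mem {ι R : Type*} [Fintype ι] [DecidableEq ι] [Semiring R]
    (A : Finset ι) (a b : R) :
    ∑ i, (a + if i ∈ A then b else 0) = Fintype.card ι * a + #A * b := by
  simp [sum_add_distrib]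

lemma coveringRadius_eq_of_forall_exists_dist_le_of_le_dist {d : ℕ}
    {D : Set (EuclideanSpace ℝ (Fin d))} {r : ℝ}
    (hcover : ∀ X : EuclideanSpace ℝ (Fin d), (∀ i, X i ∈ Set.Icc (-1 : ℝ) 1) →
      ∃ Z ∈ D, dist X Z ≤ r)
    {X₀ : EuclideanSpace ℝ (Fin d)} (hX₀ : ∀ i, X₀ i ∈ Set.Icc (-1 : ℝ) 1)
    (hfar : ∀ Z ∈ D, r ≤ dist X₀ Z) :
    coveringRadius d D = r := by
  set f : {X : EuclideanSpace ℝ (Fin d) // ∀ i, X i ∈ Set.Icc (-1 : ℝ) 1} → ℝ :=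
    fun X => ⨅ Z : D, dist (X : EuclideanSpace ℝ (Fin d)) Z
  have hf_le : ∀ X, f X ≤ r := fun X => by
    obtain ⟨Z, hZ, hXZ⟩ := hcover X X.2
    have hbdd : BddBelow (Set.range fun Z : D => dist (X : EuclideanSpace ℝ (Fin d)) Z) :=
      ⟨0, by rintro _ ⟨W, rfl⟩; exact dist_nonneg⟩
    exact (ciInf_le hbdd ⟨Z, hZ⟩).trans hXZ
  obtain ⟨Z₀, hZ₀, -⟩ := hcover X₀ hX₀
  have : Nonempty D := ⟨⟨Z₀, hZ₀⟩⟩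
  have : Nonempty {X : EuclideanSpace ℝ (Fin d) // ∀ i, X i ∈ Set.Icc (-1 : ℝ) 1} :=
    ⟨⟨X₀, hX₀⟩⟩
  have hbdd : BddAbove (Set.range f) := ⟨r, by rintro _ ⟨X, rfl⟩; exact hf_le X⟩
  exact le_antisymm (ciSup_le hf_le)
    ((le_ciInf fun Z : D => hfar Z Z.2).trans (le_ciSup hbdd ⟨X₀, hX₀⟩))

lemma EuclideanSpace.dist_sq_eq_sum_sq_sub {ι : Type*} [Fintype ι] (x y : EuclideanSpace ℝ ι) :
    dist x y ^ 2 = ∑ i, (x i - y i) ^ 2 := by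
  simp only [EuclideanSpace.dist_sq_eq, Real.dist_eq, sq_abs]

section signVector

variable {d : ℕ}

def signVector (r : ℝ) (S : Finset (Fin d)) : EuclideanSpace ℝ (Fin d) :=
  WithLp.toLp 2 fun i => if i ∈ S then -r else r

@[simp]
lemma signVector_apply (r : ℝ) (S : Finset (Fin d)) (i : Fin d) :
    signVector r S i = if i ∈ S then -r else r := rfl

lemma dist_signVector_sq (a b : ℝ) (S T : Finset (Fin d)) :
    dist (signVector a S) (signVector b T) ^ 2 = d * (a - b) ^ 2 + #(S ∆ T) * (4 * a * b) := by
  calc dist (signVector a S) (signVector b T) ^ 2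
      = ∑ i, ((a - b) ^ 2 + if i ∈ S ∆ T then 4 * a * b else 0) := by
        rw [EuclideanSpace.dist_sq_eq_sum_sq_sub]
        refine sum_congr rfl fun i _ => ?_
        simp only [signVector_apply, mem_symmDiff]
        split_ifs <;> simp_all <;> ring
    _ = d * (a - b) ^ 2 + #(S ∆ T) * (4 * a * b) := by
        rw [sum_univ_const_add_ite_mem, Fintype.card_fin]

lemma dist_signVector_half_sq_le {X : EuclideanSpace ℝ (Fin d)}
    (hX : ∀ i, X i ∈ Set.Icc (-1 : ℝ) 1) (T : Finset (Fin d)) :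
    dist X (signVector (1 / 2) T) ^ 2 ≤ d / 4 + #(univ.filter (X · < 0) ∆ T) * 2 := by
  calc dist X (signVector (1 / 2) T) ^ 2
      ≤ ∑ i, (1 / 4 + if i ∈ univ.filter (X · < 0) ∆ T then 2 else 0) := by
        rw [EuclideanSpace.dist_sq_eq_sum_sq_sub]
        refine sum_le_sum fun i _ => ?_
        obtain ⟨h1, h2⟩ := hX i
        by_cases hiT : i ∈ T <;> by_cases hXi : X i < 0 <;>
          simp [hiT, hXi, mem_symmDiff] <;> nlinarith
    _ = d / 4 + #(univ.filter (X · < 0) ∆ T) * 2 := by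
        rw [sum_univ_const_add_ite_mem, Fintype.card_fin]; ring

lemma mem_halfFractionDesign_iff {Z : EuclideanSpace ℝ (Fin d)} :
    Z ∈ halfFractionDesign d ↔
      ∃ T : Finset (Fin d), Even #T ∧ signVector (1 / 2) T = Z := by
  constructor
  · rintro ⟨hZ, heven⟩
    refine ⟨_, heven, ?_⟩
    ext i
    rcases hZ i with h | h <;> norm_num [h]
  · rintro ⟨T, hT, rfl⟩
    refine ⟨fun i => by by_cases hi : i ∈ T <;> simp [hi], ?_⟩
    convert hT
    ext i
    by_cases hi : i ∈ T <;> norm_num [hi]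

lemma exists_mem_halfFractionDesign_dist_sq_le {X : EuclideanSpace ℝ (Fin d)}
    (hX : ∀ i, X i ∈ Set.Icc (-1 : ℝ) 1) :
    ∃ Z ∈ halfFractionDesign d, dist X Z ^ 2 ≤ (d + 8) / 4 := by
  obtain ⟨T, hT, hST⟩ := exists_even_card_and_card_symmDiff_le_one (univ.filter (X · < 0))
  refine ⟨_, mem_halfFractionDesign_iff.mpr ⟨T, hT, rfl⟩, ?_⟩
  have : (#(univ.filter (X · < 0) ∆ T) : ℝ) ≤ 1 := by exact_mod_cast hST
  linarith [dist_signVector_half_sq_le hX T]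

lemma le_dist_signVector_one_singleton_sq (j : Fin d) {Z : EuclideanSpace ℝ (Fin d)}
    (hZ : Z ∈ halfFractionDesign d) : (d + 8) / 4 ≤ dist (signVector 1 {j}) Z ^ 2 := by
  obtain ⟨T, hT, rfl⟩ := mem_halfFractionDesign_iff.mp hZ
  have hne : ({j} ∆ T).Nonempty := by
    rw [symmDiff_nonempty]
    rintro rfl
    simp at hT
  have : (1 : ℝ) ≤ #({j} ∆ T) := by exact_mod_cast hne.card_pos
  rw [dist_signVector_sq]
  linarith

end signVector

theorem coveringRadius_halfFraction (d : ℕ) (hd : 3 ≤ d) :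
    coveringRadius d (halfFractionDesign d) = Real.sqrt (d + 8) / 2 := by
  have hr : Real.sqrt (d + 8) / 2 = Real.sqrt ((d + 8) / 4) := by
    rw [Real.sqrt_div' _ (by norm_num : (0 : ℝ) ≤ 4), show (4:ℝ) = 2 ^ 2 by norm_num,
      Real.sqrt_sq (by norm_num)]
  rw [hr]
  refine coveringRadius_eq_of_forall_exists_dist_le_of_le_dist
    (X₀ := signVector 1 {⟨0, by omega⟩}) ?_ ?_ ?_
  · intro X hX
    obtain ⟨Z, hZ, hXZ⟩ := exists_mem_halfFractionDesign_dist_sq_le hX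
    exact ⟨Z, hZ, Real.le_sqrt_of_sq_le hXZ⟩
  · intro i
    rw [signVector_apply]
    split_ifs <;> norm_num
  · intro Z hZ
    rw [Real.sqrt_le_left dist_nonneg]
    exact le_dist_signVector_one_singleton_sq _ hZ
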